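/- arXiv:1308.2867 — 2 statements merged into one kernel-verified Lean document; each statement's English description precedes it below -/
import Mathlib

section
/- Let f be standard self-concordant on an open convex set dom f ⊆ ℝⁿ, g : ℝⁿ → ℝ ∪ {+∞} proper, lower semicontinuous and convex, F := f + g. Fix x ∈ dom F with ∇²f(x) positive definite and v ∈ ∂g(x), and set λ(x) := ‖∇f(x) + v‖*_x. Then every y ∈ dom F with F(y) ≤ F(x) and y ≠ x satisfies ω(‖y − x‖_x)/‖y − x‖_x ≤ λ(x), where ω(t) := t − ln(1+t). Consequently, if λ(x) < 1, the sublevel set { y ∈ dom F : F(y) ≤ F(x) } is bounded. -/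
open Matrix Set Filter Topology

noncomputable section

variable {n : ℕ}

/-- Weighted (semi)norm induced by a matrix `H`: `‖z‖_H = √(zᵀ H z)`. -/
def mNorm (H : Matrix (Fin n) (Fin n) ℝ) (z : Fin n → ℝ) : ℝ :=
  Real.sqrt (z ⬝ᵥ H.mulVec z)

/-- Dual weighted norm, `‖z‖*_H = √(zᵀ H⁻¹ z)`. -/
def mDualNorm (H : Matrix (Fin n) (Fin n) ℝ) (z : Fin n → ℝ) : ℝ :=
  Real.sqrt (z ⬝ᵥ H⁻¹.mulVec z)

/-- A function `g : ℝⁿ → ℝ ∪ {+∞}` (modelled with values in `EReal`) is proper. -/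
def EProper (g : (Fin n → ℝ) → EReal) : Prop :=
  (∀ x, g x ≠ ⊥) ∧ ∃ x, g x ≠ ⊤

/-- Convexity of an `EReal`-valued function on `ℝⁿ`. -/
def EConvex (g : (Fin n → ℝ) → EReal) : Prop :=
  ∀ x y : Fin n → ℝ, ∀ a b : ℝ, 0 ≤ a → 0 ≤ b → a + b = 1 →
    g (a • x + b • y) ≤ (a : EReal) * g x + (b : EReal) * g y

/-- `v` is a subgradient of `g` at `x`. -/
def ESubgradAt (g : (Fin n → ℝ) → EReal) (v x : Fin n → ℝ) : Prop :=
  g x ≠ ⊤ ∧ ∀ y, g x + ((v ⬝ᵥ (y - x) : ℝ) : EReal) ≤ g y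

/-- Objective of the proximal subproblem `g(x) + ½ xᵀHx − uᵀx`. -/
def proxObj (H : Matrix (Fin n) (Fin n) ℝ) (g : (Fin n → ℝ) → EReal)
    (u x : Fin n → ℝ) : EReal :=
  g x + ((1 / 2 * (x ⬝ᵥ H.mulVec x) - u ⬝ᵥ x : ℝ) : EReal)

/-- `p` solves the proximal subproblem, i.e. `p = P^g_H(u)`. -/
def IsProxPt (H : Matrix (Fin n) (Fin n) ℝ) (g : (Fin n → ℝ) → EReal)
    (u p : Fin n → ℝ) : Prop :=
  ∀ x, proxObj H g u p ≤ proxObj H g u x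

/-- The continuous linear map `y ↦ vᵀy`. -/
def dotCLM (v : Fin n → ℝ) : (Fin n → ℝ) →L[ℝ] ℝ :=
  LinearMap.toContinuousLinearMap
    { toFun := fun y => v ⬝ᵥ y
      map_add' := fun a b => dotProduct_add v a b
      map_smul' := fun c a => by simp }

/-- `f` is standard self-concordant on the open convex set `D`. -/
def StdSelfConcordantOn (D : Set (Fin n → ℝ)) (f : (Fin n → ℝ) → ℝ) : Prop :=
  IsOpen D ∧ Convex ℝ D ∧ ConvexOn ℝ D f ∧ ContDiffOn ℝ 3 f D ∧
    ∀ x ∈ D, ∀ v : Fin n → ℝ, ∀ t : ℝ, x + t • v ∈ D →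
      |iteratedDeriv 3 (fun s : ℝ => f (x + s • v)) t| ≤
        2 * iteratedDeriv 2 (fun s : ℝ => f (x + s • v)) t ^ ((3 : ℝ) / 2)

open scoped Classical in
/-- The extended objective `F = f + g`, equal to `+∞` outside `dom f`. -/
def Fext (D : Set (Fin n → ℝ)) (f : (Fin n → ℝ) → ℝ) (g : (Fin n → ℝ) → EReal)
    (x : Fin n → ℝ) : EReal :=
  if x ∈ D then (f x : EReal) + g x else ⊤

def omega (t : ℝ) : ℝ := t - Real.log (1 + t)

def omegaStar (t : ℝ) : ℝ := -t - Real.log (1 - t)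

/-! Along the segment from `x` to `y`, `φ(t) = f(x + t(y - x))` satisfies `|φ'''| ≤ 2 φ''^{3/2}`,
so `t ↦ φ''(t)^{-1/2}` is 1-Lipschitz and `φ''(t) ≥ (r⁻¹ + t)⁻²` with `r = ‖y - x‖_x`.
Integrating twice gives `f(y) ≥ f(x) + ⟨∇f(x), y - x⟩ + ω(r)`. Together with the subgradient
inequality for `g` and `F(y) ≤ F(x)` this yields `ω(r) ≤ -⟨∇f(x) + v, y - x⟩ ≤ λ(x) r` by
Cauchy–Schwarz in the local norm. Since `ω(r)/r → 1`, `λ(x) < 1` bounds `r`, and the local norm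
controls every coordinate through `|z i| ≤ ‖eᵢ‖*_x ‖z‖_x`. -/

section WeightedNorm

variable {H : Matrix (Fin n) (Fin n) ℝ}

lemma sq_dotProduct_mulVec_le (hH : H.PosSemidef) (w z : Fin n → ℝ) :
    (w ⬝ᵥ H *ᵥ z) ^ 2 ≤ (w ⬝ᵥ H *ᵥ w) * (z ⬝ᵥ H *ᵥ z) := by
  let := H.toSeminormedAddCommGroup hH
  let := H.toInnerProductSpace hH
  have hinner : ∀ a b : Fin n → ℝ, (inner ℝ a b : ℝ) = a ⬝ᵥ H *ᵥ b := fun a b => by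
    change (H *ᵥ b) ⬝ᵥ star a = _
    simp [dotProduct_comm]
  have := real_inner_mul_inner_self_le w z
  simp only [hinner] at this
  nlinarith [abs_mul_abs_self (w ⬝ᵥ H *ᵥ z), le_abs_self (w ⬝ᵥ H *ᵥ z)]

lemma abs_dotProduct_le_mDualNorm_mul_mNorm (hH : H.PosDef) (a z : Fin n → ℝ) :
    |a ⬝ᵥ z| ≤ mDualNorm H a * mNorm H z := by
  set w := H⁻¹ *ᵥ a
  have hHw : H *ᵥ w = a := by
    rw [mulVec_mulVec, mul_nonsing_inv _ hH.det_pos.ne'.isUnit, one_mulVec]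
  have hdual : a ⬝ᵥ H⁻¹ *ᵥ a = w ⬝ᵥ H *ᵥ w := by rw [hHw, dotProduct_comm]
  have hcs := sq_dotProduct_mulVec_le hH.posSemidef z w
  have hza : z ⬝ᵥ H *ᵥ w = a ⬝ᵥ z := by rw [hHw, dotProduct_comm]
  rw [hza, mul_comm] at hcs
  have hw : 0 ≤ w ⬝ᵥ H *ᵥ w := by simpa using hH.posSemidef.dotProduct_mulVec_nonneg w
  rw [mDualNorm, mNorm, hdual, ← Real.sqrt_mul hw, ← Real.sqrt_sq_eq_abs]
  exact Real.sqrt_le_sqrt hcs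

lemma mNorm_pos (hH : H.PosDef) {z : Fin n → ℝ} (hz : z ≠ 0) : 0 < mNorm H z :=
  Real.sqrt_pos.2 (by simpa using hH.dotProduct_mulVec_pos hz)

lemma abs_apply_le_mNorm (hH : H.PosDef) (z : Fin n → ℝ) (i : Fin n) :
    |z i| ≤ mDualNorm H (Pi.single i 1) * mNorm H z := by
  simpa using abs_dotProduct_le_mDualNorm_mul_mNorm hH (Pi.single i 1) z

lemma isBounded_of_mNorm_sub_le (hH : H.PosDef) {S : Set (Fin n → ℝ)} {x : Fin n → ℝ} {R : ℝ}
    (hS : ∀ y ∈ S, mNorm H (y - x) ≤ R) : Bornology.IsBounded S := by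
  set C := ∑ i, mDualNorm H (Pi.single i 1)
  refine (Metric.isBounded_closedBall (x := x) (r := C * R)).subset fun y hy => ?_
  have hR : mNorm H (y - x) ≤ R := hS y hy
  have hC : 0 ≤ C := Finset.sum_nonneg fun i _ => Real.sqrt_nonneg _
  rw [Metric.mem_closedBall, dist_eq_norm,
    pi_norm_le_iff_of_nonneg (mul_nonneg hC ((Real.sqrt_nonneg _).trans hR))]
  intro i
  calc ‖(y - x) i‖ ≤ mDualNorm H (Pi.single i 1) * mNorm H (y - x) := abs_apply_le_mNorm hH _ i
    _ ≤ C * R := mul_le_mul (Finset.single_le_sum (f := fun j => mDualNorm H (Pi.single j 1))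
        (fun j _ => Real.sqrt_nonneg _) (Finset.mem_univ i)) hR (Real.sqrt_nonneg _) hC

end WeightedNorm

lemma le_of_omega_div_le {r l : ℝ} (hr : 0 < r) (hl : l < 1) (h : omega r / r ≤ l) :
    r ≤ 2 / (1 - l) ^ 2 := by
  have hε : 0 < 1 - l := by linarith
  have hlog : (1 - l) * r ≤ Real.log (1 + r) := by
    rw [div_le_iff₀ hr, omega] at h
    linarith
  have hexp : 1 + (1 - l) * r + ((1 - l) * r) ^ 2 / 2 ≤ 1 + r :=
    (Real.quadratic_le_exp_of_nonneg (by positivity)).trans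
      ((Real.exp_le_exp.2 hlog).trans (Real.exp_log (by linarith)).le)
  rw [le_div_iff₀ (by positivity)]
  nlinarith

section SelfConcordantScalar

variable {a b : ℝ}

lemma image_le_of_hasDerivAt_le {f f' B B' : ℝ → ℝ}
    (hf : ∀ t ∈ Icc a b, HasDerivAt f (f' t) t) (hB : ∀ t ∈ Icc a b, HasDerivAt B (B' t) t)
    (ha : f a ≤ B a) (hle : ∀ t ∈ Icc a b, f' t ≤ B' t) : ∀ t ∈ Icc a b, f t ≤ B t :=
  image_le_of_deriv_right_le_deriv_boundary
    (fun t ht => (hf t ht).continuousAt.continuousWithinAt)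
    (fun t ht => (hf t (Ico_subset_Icc_self ht)).hasDerivWithinAt) ha
    (fun t ht => (hB t ht).continuousAt.continuousWithinAt)
    (fun t ht => (hB t (Ico_subset_Icc_self ht)).hasDerivWithinAt)
    (fun t ht => hle t (Ico_subset_Icc_self ht))

variable {ψ ψ' : ℝ → ℝ}

lemma inv_sqrt_le_add_of_abs_deriv_le (hψ : ∀ t ∈ Icc a b, HasDerivAt ψ (ψ' t) t)
    (hpos : ∀ t ∈ Icc a b, 0 < ψ t) (hsc : ∀ t ∈ Icc a b, |ψ' t| ≤ 2 * ψ t ^ ((3 : ℝ) / 2)) :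
    ∀ t ∈ Icc a b, (√(ψ t))⁻¹ ≤ (√(ψ a))⁻¹ + (t - a) := by
  have hderiv : ∀ t ∈ Icc a b, HasDerivAt (fun s => (√(ψ s))⁻¹)
      (-(ψ' t / (2 * √(ψ t))) / √(ψ t) ^ 2) t := fun t ht =>
    ((hψ t ht).sqrt (hpos t ht).ne').inv (Real.sqrt_pos.2 (hpos t ht)).ne'
  refine image_le_of_hasDerivAt_le hderiv (fun t _ => ((hasDerivAt_id t).sub_const a).const_add _)
    (by simp) fun t ht => ?_
  have hs : 0 < √(ψ t) := Real.sqrt_pos.2 (hpos t ht)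
  have hpow : ψ t ^ ((3 : ℝ) / 2) = √(ψ t) ^ 3 := by
    rw [Real.sqrt_eq_rpow, ← Real.rpow_natCast, ← Real.rpow_mul (hpos t ht).le]
    norm_num
  have := neg_le_of_abs_le (hsc t ht)
  rw [hpow] at this
  rw [neg_div, neg_le, div_div, le_div_iff₀ (by positivity)]
  nlinarith

lemma inv_add_le_sqrt_of_abs_deriv_le (hψ : ∀ t ∈ Icc a b, HasDerivAt ψ (ψ' t) t)
    (hsc : ∀ t ∈ Icc a b, |ψ' t| ≤ 2 * ψ t ^ ((3 : ℝ) / 2)) (ha : 0 < ψ a) :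
    ∀ t ∈ Icc a b, ((√(ψ a))⁻¹ + (t - a))⁻¹ ≤ √(ψ t) := by
  set c := (√(ψ a))⁻¹
  have hden : ∀ t, a ≤ t → 0 < c + (t - a) := fun t ht => by
    have : 0 < c := inv_pos.2 (Real.sqrt_pos.2 ha)
    linarith
  -- `ψ > 0` is not assumed: continuous induction propagates the barrier, which keeps `ψ` positive.
  set s := {t | (c + (t - a))⁻¹ ≤ √(ψ t)}
  suffices Icc a b ⊆ s from fun t ht => this ht
  refine IsClosed.Icc_subset_of_forall_mem_nhdsWithin ?_ (by simp [s, c]) ?_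
  · rw [Set.inter_comm]
    exact isClosed_Icc.isClosed_le
      (ContinuousOn.inv₀ (by fun_prop) fun t ht => (hden t ht.1).ne')
      fun t ht => (hψ t ht).continuousAt.sqrt.continuousWithinAt
  · rintro x ⟨hxs, hx⟩
    have hψx : 0 < ψ x := Real.sqrt_pos.1 ((inv_pos.2 (hden x hx.1)).trans_le hxs)
    obtain ⟨u, hu, hpos⟩ := exists_Ico_subset_of_mem_nhds'
      ((hψ x (Ico_subset_Icc_self hx)).continuousAt.eventually (lt_mem_nhds hψx)) hx.2
    refine mem_of_superset (Ioo_mem_nhdsGT hu.1) fun y hy => ?_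
    have hxy : Icc x y ⊆ Icc a b := Icc_subset_Icc hx.1 (hy.2.le.trans hu.2)
    have hxy' : Icc x y ⊆ Ico x u := Icc_subset_Ico_right hy.2
    have hlip := inv_sqrt_le_add_of_abs_deriv_le (fun t ht => hψ t (hxy ht))
      (fun t ht => hpos (hxy' ht)) (fun t ht => hsc t (hxy ht)) y ⟨hy.1.le, le_rfl⟩
    have hx' := inv_le_of_inv_le₀ (hden x hx.1) hxs
    refine inv_le_of_inv_le₀ (Real.sqrt_pos.2 (hpos (hxy' ⟨hy.1.le, le_rfl⟩))) ?_
    linarith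

theorem add_add_omega_le_of_abs_deriv_le {φ φ' φ'' φ''' : ℝ → ℝ}
    (hφ : ∀ t ∈ Icc 0 1, HasDerivAt φ (φ' t) t) (hφ' : ∀ t ∈ Icc 0 1, HasDerivAt φ' (φ'' t) t)
    (hφ'' : ∀ t ∈ Icc 0 1, HasDerivAt φ'' (φ''' t) t)
    (hsc : ∀ t ∈ Icc 0 1, |φ''' t| ≤ 2 * φ'' t ^ ((3 : ℝ) / 2)) (h0 : 0 < φ'' 0) :
    φ 0 + φ' 0 + omega √(φ'' 0) ≤ φ 1 := by
  set r := √(φ'' 0)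
  have hr : 0 < r := Real.sqrt_pos.2 h0
  have hden : ∀ t ∈ Icc (0 : ℝ) 1, 0 < r⁻¹ + t := fun t ht =>
    add_pos_of_pos_of_nonneg (inv_pos.2 hr) ht.1
  have hbarrier : ∀ t ∈ Icc (0 : ℝ) 1, (r⁻¹ + t)⁻¹ ^ 2 ≤ φ'' t := fun t ht => by
    have := inv_add_le_sqrt_of_abs_deriv_le hφ'' hsc h0 t ht
    rw [sub_zero] at this
    have hpos : 0 < φ'' t := Real.sqrt_pos.1 ((inv_pos.2 (hden t ht)).trans_le this)
    calc (r⁻¹ + t)⁻¹ ^ 2 ≤ √(φ'' t) ^ 2 := by gcongr; exact (inv_pos.2 (hden t ht)).le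
      _ = φ'' t := Real.sq_sqrt hpos.le
  have hslope : ∀ t ∈ Icc (0 : ℝ) 1, φ' 0 + r - (r⁻¹ + t)⁻¹ ≤ φ' t := by
    refine image_le_of_hasDerivAt_le (f' := fun t => (r⁻¹ + t)⁻¹ ^ 2) (fun t ht => ?_) hφ'
      (by simp) hbarrier
    refine ((((hasDerivAt_id t).const_add r⁻¹).inv (hden t ht).ne').const_sub
      (φ' 0 + r)).congr_deriv ?_
    simp [inv_pow, neg_div]
  have hprimitive : ∀ t ∈ Icc (0 : ℝ) 1, HasDerivAt
      (fun t => φ 0 + (φ' 0 + r) * t - Real.log (1 + r * t)) (φ' 0 + r - (r⁻¹ + t)⁻¹) t := by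
    intro t ht
    have h1 : 0 < 1 + r * t := by nlinarith [ht.1]
    refine ((((hasDerivAt_id t).const_mul (φ' 0 + r)).const_add (φ 0)).sub
      ((((hasDerivAt_id t).const_mul r).const_add 1).log h1.ne')).congr_deriv ?_
    simp only [id, mul_one]
    field_simp
  have hvalue := image_le_of_hasDerivAt_le hprimitive hφ (by simp) hslope 1 ⟨zero_le_one, le_rfl⟩
  simp only [mul_one] at hvalue
  rw [omega]
  linarith

end SelfConcordantScalar

section LineRestriction

variable {φ ψ : ℝ → ℝ} {T : Set ℝ}

lemma eqOn_iteratedDeriv_two {A : ℝ → ℝ} (hT : IsOpen T) (hφ : ∀ t ∈ T, HasDerivAt φ (A t) t)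
    (hA : ∀ t ∈ T, HasDerivAt A (ψ t) t) : EqOn (iteratedDeriv 2 φ) ψ T := fun t ht => by
  rw [iteratedDeriv_succ, iteratedDeriv_one,
    (eventuallyEq_of_mem (hT.mem_nhds ht) fun s hs => (hφ s hs).deriv).deriv_eq]
  exact (hA t ht).deriv

lemma hasDerivAt_of_eqOn_iteratedDeriv {N : WithTop ℕ∞} {m : ℕ} (hT : IsOpen T)
    (hφ : ContDiffOn ℝ N φ T) (hm : m < N) (hψ : EqOn (iteratedDeriv m φ) ψ T) {t : ℝ}
    (ht : t ∈ T) : HasDerivAt ψ (iteratedDeriv (m + 1) φ t) t := by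
  have hdiff : DifferentiableAt ℝ (iteratedDeriv m φ) t :=
    ((hφ.differentiableOn_iteratedDerivWithin hm hT.uniqueDiffOn).congr
      fun s hs => (iteratedDerivWithin_of_isOpen hT hs).symm).differentiableAt (hT.mem_nhds ht)
  have hev : iteratedDeriv m φ =ᶠ[𝓝 t] ψ := eventuallyEq_of_mem (hT.mem_nhds ht) hψ
  rw [iteratedDeriv_succ]
  exact hdiff.hasDerivAt.congr_of_eventuallyEq hev.symm

end LineRestriction

theorem StdSelfConcordantOn.add_dotProduct_add_omega_le {D : Set (Fin n → ℝ)}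
    {f : (Fin n → ℝ) → ℝ} {f' : (Fin n → ℝ) → Fin n → ℝ}
    {f'' : (Fin n → ℝ) → Matrix (Fin n) (Fin n) ℝ} (hf : StdSelfConcordantOn D f)
    (hgrad : ∀ x ∈ D, HasFDerivAt f (dotCLM (f' x)) x)
    (hhess : ∀ x ∈ D, HasFDerivAt f' (LinearMap.toContinuousLinearMap (f'' x).mulVecLin) x)
    {x y : Fin n → ℝ} (hx : x ∈ D) (hy : y ∈ D) (hpos : 0 < (y - x) ⬝ᵥ f'' x *ᵥ (y - x)) :
    f x + f' x ⬝ᵥ (y - x) + omega (mNorm (f'' x) (y - x)) ≤ f y := by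
  obtain ⟨hDo, hDc, -, hf3, hsc⟩ := hf
  set u := y - x
  set γ : ℝ → Fin n → ℝ := fun t => x + t • u
  set T := γ ⁻¹' D
  have hT : IsOpen T := hDo.preimage (by fun_prop)
  have h01 : Icc 0 1 ⊆ T := fun t ht => hDc.add_smul_sub_mem hx hy ht
  have hγ : ∀ t, HasDerivAt γ u t := fun t =>
    (((hasDerivAt_id t).smul_const u).const_add x).congr_deriv (one_smul ℝ u)
  have hφ : ∀ t ∈ T, HasDerivAt (f ∘ γ) (u ⬝ᵥ f' (γ t)) t := fun t ht =>
    ((hgrad _ ht).comp_hasDerivAt t (hγ t)).congr_deriv (dotProduct_comm (f' (γ t)) u)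
  have hA : ∀ t ∈ T, HasDerivAt (fun s => u ⬝ᵥ f' (γ s)) (u ⬝ᵥ f'' (γ t) *ᵥ u) t :=
    fun t ht => (dotCLM u).hasFDerivAt.comp_hasDerivAt t ((hhess _ ht).comp_hasDerivAt t (hγ t))
  have hφ3 : ContDiffOn ℝ 3 (f ∘ γ) T := hf3.comp (by fun_prop) fun t ht => ht
  have hψ := eqOn_iteratedDeriv_two hT hφ hA
  have hsc' : ∀ t ∈ Icc (0 : ℝ) 1,
      |iteratedDeriv 3 (f ∘ γ) t| ≤ 2 * (u ⬝ᵥ f'' (γ t) *ᵥ u) ^ ((3 : ℝ) / 2) := fun t ht => by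
    have h2 : iteratedDeriv 2 (f ∘ γ) t = u ⬝ᵥ f'' (γ t) *ᵥ u := hψ (h01 ht)
    rw [← h2]
    exact hsc x hx u t (h01 ht)
  have key := add_add_omega_le_of_abs_deriv_le (φ''' := iteratedDeriv 3 (f ∘ γ))
    (fun t ht => hφ t (h01 ht))
    (fun t ht => hA t (h01 ht))
    (fun t ht => hasDerivAt_of_eqOn_iteratedDeriv hT hφ3 (by norm_num) hψ (h01 ht))
    hsc' (by simpa [γ] using hpos)
  simpa [γ, u, mNorm, dotProduct_comm] using key

lemma add_dotProduct_sub_le_of_Fext_le {D : Set (Fin n → ℝ)} {f : (Fin n → ℝ) → ℝ}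
    {g : (Fin n → ℝ) → EReal} {x y v : Fin n → ℝ} (hx : x ∈ D) (hy : y ∈ D) (hgx : g x ≠ ⊥)
    (hgy : g y ≠ ⊤) (hv : ESubgradAt g v x) (hF : Fext D f g y ≤ Fext D f g x) :
    f y + v ⬝ᵥ (y - x) ≤ f x := by
  obtain ⟨a, ha⟩ : ∃ a : ℝ, g x = a := ⟨_, (EReal.coe_toReal hv.1 hgx).symm⟩
  have hsub := hv.2 y
  rw [ha, ← EReal.coe_add] at hsub
  obtain ⟨b, hb⟩ : ∃ b : ℝ, g y = b :=
    ⟨_, (EReal.coe_toReal hgy (ne_bot_of_le_ne_bot (EReal.coe_ne_bot _) hsub)).symm⟩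
  rw [hb] at hsub
  simp only [Fext, if_pos hx, if_pos hy, ha, hb] at hF
  norm_cast at hsub hF
  linarith

theorem omega_div_mNorm_le_mDualNorm {D : Set (Fin n → ℝ)} {f : (Fin n → ℝ) → ℝ}
    {f' : (Fin n → ℝ) → Fin n → ℝ} {f'' : (Fin n → ℝ) → Matrix (Fin n) (Fin n) ℝ}
    {g : (Fin n → ℝ) → EReal} {x y v : Fin n → ℝ} (hf : StdSelfConcordantOn D f)
    (hgrad : ∀ x ∈ D, HasFDerivAt f (dotCLM (f' x)) x)
    (hhess : ∀ x ∈ D, HasFDerivAt f' (LinearMap.toContinuousLinearMap (f'' x).mulVecLin) x)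
    (hxD : x ∈ D) (hgx : g x ≠ ⊥) (hv : ESubgradAt g v x) (hpd : (f'' x).PosDef)
    (hyD : y ∈ D) (hgy : g y ≠ ⊤) (hF : Fext D f g y ≤ Fext D f g x) (hyx : y ≠ x) :
    omega (mNorm (f'' x) (y - x)) / mNorm (f'' x) (y - x) ≤ mDualNorm (f'' x) (f' x + v) := by
  have hr := mNorm_pos hpd (sub_ne_zero.2 hyx)
  have hlower := hf.add_dotProduct_add_omega_le hgrad hhess hxD hyD (Real.sqrt_pos.1 hr)
  have hsub := add_dotProduct_sub_le_of_Fext_le hxD hyD hgx hgy hv hF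
  have hcs := abs_dotProduct_le_mDualNorm_mul_mNorm hpd (f' x + v) (y - x)
  rw [add_dotProduct] at hcs
  rw [div_le_iff₀ hr]
  linarith [neg_abs_le (f' x ⬝ᵥ (y - x) + v ⬝ᵥ (y - x))]

theorem sublevel_set_bounded_general
    (n : ℕ) (D : Set (Fin n → ℝ)) (f : (Fin n → ℝ) → ℝ)
    (f' : (Fin n → ℝ) → Fin n → ℝ)
    (f'' : (Fin n → ℝ) → Matrix (Fin n) (Fin n) ℝ)
    (hf : StdSelfConcordantOn D f)
    (hgrad : ∀ x ∈ D, HasFDerivAt f (dotCLM (f' x)) x)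
    (hhess : ∀ x ∈ D,
      HasFDerivAt f' (LinearMap.toContinuousLinearMap (f'' x).mulVecLin) x)
    (g : (Fin n → ℝ) → EReal) (hg_proper : EProper g)
    (x v : Fin n → ℝ) (hxD : x ∈ D)
    (hv : ESubgradAt g v x) (hpd : (f'' x).PosDef) :
    (∀ y : Fin n → ℝ, y ∈ D → g y ≠ ⊤ → Fext D f g y ≤ Fext D f g x → y ≠ x →
        omega (mNorm (f'' x) (y - x)) / mNorm (f'' x) (y - x) ≤
          mDualNorm (f'' x) (f' x + v)) ∧
      (mDualNorm (f'' x) (f' x + v) < 1 →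
        Bornology.IsBounded
          {y : Fin n → ℝ | (y ∈ D ∧ g y ≠ ⊤) ∧ Fext D f g y ≤ Fext D f g x}) := by
  have hdecrease := fun y => omega_div_mNorm_le_mDualNorm (y := y) hf hgrad hhess hxD
    (hg_proper.1 x) hv hpd
  refine ⟨hdecrease, fun hlam => isBounded_of_mNorm_sub_le hpd (x := x)
    (R := 2 / (1 - mDualNorm (f'' x) (f' x + v)) ^ 2) ?_⟩
  rintro y ⟨⟨hyD, hyg⟩, hF⟩
  rcases eq_or_ne y x with rfl | hyx
  · simp only [sub_self, mNorm, mulVec_zero, dotProduct_zero, Real.sqrt_zero]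
    positivity
  · exact le_of_omega_div_le (mNorm_pos hpd (sub_ne_zero.2 hyx)) hlam
      (hdecrease y hyD hyg hF hyx)

/-- Every `y ∈ dom F` with `F(y) ≤ F(x)`, `y ≠ x` satisfies
`ω(‖y − x‖_x)/‖y − x‖_x ≤ λ(x)`; consequently, if `λ(x) < 1` the sublevel set is bounded. -/
theorem sublevel_set_bounded
    (n : ℕ) (D : Set (Fin n → ℝ)) (f : (Fin n → ℝ) → ℝ)
    (f' : (Fin n → ℝ) → Fin n → ℝ)
    (f'' : (Fin n → ℝ) → Matrix (Fin n) (Fin n) ℝ)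
    (hf : StdSelfConcordantOn D f)
    (hgrad : ∀ x ∈ D, HasFDerivAt f (dotCLM (f' x)) x)
    (hhess : ∀ x ∈ D,
      HasFDerivAt f' (LinearMap.toContinuousLinearMap (f'' x).mulVecLin) x)
    (g : (Fin n → ℝ) → EReal) (hg_proper : EProper g)
    (hg_lsc : LowerSemicontinuous g) (hg_conv : EConvex g)
    (x v : Fin n → ℝ) (hxD : x ∈ D) (hxg : g x ≠ ⊤)
    (hv : ESubgradAt g v x) (hpd : (f'' x).PosDef) :
    (∀ y : Fin n → ℝ, y ∈ D → g y ≠ ⊤ → Fext D f g y ≤ Fext D f g x → y ≠ x →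
        omega (mNorm (f'' x) (y - x)) / mNorm (f'' x) (y - x) ≤
          mDualNorm (f'' x) (f' x + v)) ∧
      (mDualNorm (f'' x) (f' x + v) < 1 →
        Bornology.IsBounded
          {y : Fin n → ℝ | (y ∈ D ∧ g y ≠ ⊤) ∧ Fext D f g y ≤ Fext D f g x}) :=
  sublevel_set_bounded_general n D f f' f'' hf hgrad hhess g hg_proper x v hxD hv hpd
end
end

section
/- Let f be standard self-concordant on an open convex set dom f ⊆ ℝⁿ, g : ℝⁿ → ℝ ∪ {+∞} proper, lower semicontinuous and convex, F := f + g with minimum value F(x*). Let {x^k} be generated by the damped proximal-Newton scheme x^{k+1} := x^k + (1+λ_k)⁻¹ d^k, where d^k := P^g_{∇²f(x^k)}(∇²f(x^k)x^k − ∇f(x^k)) − x^k and λ_k := ‖d^k‖_{x^k}, each ∇²f(x^k) being positive definite. Fix σ ∈ (0,1). If λ_j ≥ σ for all j = 0,…,k−1, then F(x*) ≤ F(x^k) ≤ F(x⁰) − k·ω(σ); consequently the number of iterations needed to reach an iterate with λ_k < σ is at most ⌊(F(x⁰) − F(x*))/ω(σ)⌋ + 1, where ω(t) := t − ln(1+t).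 -/
open Matrix Set Filter Topology

noncomputable section

variable {n : ℕ}

/-! On a line `φ(t) = f(x + t d)` with `φ''(0) = λ²`, self-concordance says that `φ''^{-1/2}` is
`1`-Lipschitz, so `φ''(t) ≤ (λ / (1 - λt))²`, the second derivative of `t ↦ ω*(λt)`;
integrating twice gives `f(x + αd) ≤ f(x) + α⟨∇f(x), d⟩ + ω*(λα)`.  Optimality of the proximal
point `x + d` and convexity of `g` give `g(x + d) ≤ g(x) - ⟨∇f(x), d⟩ - λ²`, and convexity of `g`
along the damped step `α = 1/(1 + λ)` combines the two into `F(x⁺) ≤ F(x) - ω(λ)`.  Each step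
with `λ ≥ σ` thus decreases `F` by at least `ω(σ)`, and `F` stays above `F(x*)`. -/

theorem ContDiffOn.hasDerivAt_iteratedDeriv {𝕜 F : Type*} [NontriviallyNormedField 𝕜]
    [NormedAddCommGroup F] [NormedSpace 𝕜 F] {φ : 𝕜 → F} {I : Set 𝕜} {m : WithTop ℕ∞}
    {k : ℕ} (hφ : ContDiffOn 𝕜 m φ I) (hI : IsOpen I) (hk : (k : WithTop ℕ∞) < m) {t : 𝕜}
    (ht : t ∈ I) : HasDerivAt (iteratedDeriv k φ) (iteratedDeriv (k + 1) φ t) t := by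
  have hwithin : iteratedDerivWithin k φ I =ᶠ[𝓝 t] iteratedDeriv k φ :=
    eventually_of_mem (hI.mem_nhds ht) (iteratedDerivWithin_of_isOpen hI)
  rw [iteratedDeriv_succ]
  exact (((hφ.differentiableOn_iteratedDerivWithin hk hI.uniqueDiffOn) t ht).differentiableAt
    (hI.mem_nhds ht)).congr_of_eventuallyEq hwithin.symm |>.hasDerivAt

theorem monotoneOn_Icc_of_hasDerivAt_nonneg {φ φ' : ℝ → ℝ} {a b : ℝ}
    (hφ : ∀ t ∈ Icc a b, HasDerivAt φ (φ' t) t) (hφ' : ∀ t ∈ Ioo a b, 0 ≤ φ' t) :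
    MonotoneOn φ (Icc a b) :=
  monotoneOn_of_hasDerivWithinAt_nonneg (convex_Icc a b)
    (fun t ht => (hφ t ht).continuousAt.continuousWithinAt)
    (fun t ht => by
      rw [interior_Icc] at ht ⊢
      exact (hφ t (Ioo_subset_Icc_self ht)).hasDerivWithinAt)
    (fun t ht => hφ' t (by rwa [interior_Icc] at ht))

theorem sub_sub_mul_le_of_deriv2_le {φ φ' φ'' ψ ψ' ψ'' : ℝ → ℝ} {a b : ℝ} (hab : a ≤ b)
    (hφ : ∀ t ∈ Icc a b, HasDerivAt φ (φ' t) t) (hφ' : ∀ t ∈ Icc a b, HasDerivAt φ' (φ'' t) t)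
    (hψ : ∀ t ∈ Icc a b, HasDerivAt ψ (ψ' t) t) (hψ' : ∀ t ∈ Icc a b, HasDerivAt ψ' (ψ'' t) t)
    (hle : ∀ t ∈ Ioo a b, φ'' t ≤ ψ'' t) :
    φ b - φ a - φ' a * (b - a) ≤ ψ b - ψ a - ψ' a * (b - a) := by
  have hmono' : MonotoneOn (fun t => ψ' t - φ' t) (Icc a b) :=
    monotoneOn_Icc_of_hasDerivAt_nonneg (fun t ht => (hψ' t ht).sub (hφ' t ht))
      (fun t ht => sub_nonneg.2 (hle t ht))
  have hmono : MonotoneOn (fun t => ψ t - φ t - (ψ' a - φ' a) * t) (Icc a b) := by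
    refine monotoneOn_Icc_of_hasDerivAt_nonneg (φ' := fun t => ψ' t - φ' t - (ψ' a - φ' a))
      (fun t ht => ((hψ t ht).sub (hφ t ht)).sub ((hasDerivAt_id t).const_mul _ |>.congr_deriv
        (mul_one _))) (fun t ht => ?_)
    exact sub_nonneg.2 (hmono' (left_mem_Icc.2 hab) (Ioo_subset_Icc_self ht) ht.1.le)
  have := hmono (left_mem_Icc.2 hab) (right_mem_Icc.2 hab) hab
  simp only at this
  linarith

section SelfConcordantODE

variable {u u' : ℝ → ℝ} {a b : ℝ}

theorem abs_inv_sqrt_sub_le (hab : a ≤ b) (hu : ∀ t ∈ Icc a b, HasDerivAt u (u' t) t)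
    (hsc : ∀ t ∈ Icc a b, |u' t| ≤ 2 * u t ^ ((3 : ℝ) / 2)) (hpos : ∀ t ∈ Icc a b, 0 < u t) :
    |(√(u b))⁻¹ - (√(u a))⁻¹| ≤ b - a := by
  have hderiv : ∀ t ∈ Icc a b, HasDerivWithinAt (fun s => (√(u s))⁻¹)
      (-(u' t / (2 * √(u t))) / √(u t) ^ 2) (Icc a b) t := fun t ht =>
    (((hu t ht).sqrt (hpos t ht).ne').inv (Real.sqrt_ne_zero'.2 (hpos t ht))).hasDerivWithinAt
  have hbound : ∀ t ∈ Ico a b, ‖-(u' t / (2 * √(u t))) / √(u t) ^ 2‖ ≤ 1 := by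
    intro t ht
    have hut := hpos t (Ico_subset_Icc_self ht)
    have hsc_t := hsc t (Ico_subset_Icc_self ht)
    rw [show (3 : ℝ) / 2 = 1 + 1 / 2 by norm_num, Real.rpow_add hut, Real.rpow_one,
      ← Real.sqrt_eq_rpow] at hsc_t
    have hst : 0 < √(u t) := Real.sqrt_pos.2 hut
    rw [Real.norm_eq_abs, abs_div, abs_neg, abs_div, Real.sq_sqrt hut.le, abs_of_pos hut,
      abs_of_pos (show 0 < 2 * √(u t) by positivity), div_div, div_le_one (by positivity)]
    linarith [show 2 * (u t * √(u t)) = 2 * √(u t) * u t by ring]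
  simpa [abs_of_nonneg (sub_nonneg.2 hab)] using
    norm_image_sub_le_of_norm_deriv_le_segment' hderiv hbound b (right_mem_Icc.2 hab)

theorem pos_of_abs_deriv_le_two_rpow (hu : ∀ t ∈ Icc a b, HasDerivAt u (u' t) t)
    (hsc : ∀ t ∈ Icc a b, |u' t| ≤ 2 * u t ^ ((3 : ℝ) / 2)) (ha : 0 < u a) :
    ∀ t ∈ Icc a b, 0 < u t := by
  by_contra! hbad
  set S := {t ∈ Icc a b | u t ≤ 0}
  have hS_closed : IsClosed S :=
    ContinuousOn.preimage_isClosed_of_isClosed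
      (fun t ht => (hu t ht).continuousAt.continuousWithinAt) isClosed_Icc isClosed_Iic
  have hS_bdd : BddBelow S := ⟨a, fun t ht => ht.1.1⟩
  set t₀ := sInf S
  have ht₀ : t₀ ∈ S := hS_closed.csInf_mem hbad hS_bdd
  have hpos_before : ∀ t ∈ Ico a t₀, 0 < u t := fun t ht => by
    by_contra! h
    exact (csInf_le hS_bdd ⟨⟨ht.1, ht.2.le.trans ht₀.1.2⟩, h⟩).not_gt ht.2
  have hat₀ : a < t₀ := lt_of_le_of_ne ht₀.1.1 fun h => (h ▸ ha).not_ge ht₀.2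
  -- Along `[a, t₀)` the Lipschitz bound keeps `u` away from `0`.
  have hbase : 0 < (√(u a))⁻¹ + (b - a) := by
    have : 0 < (√(u a))⁻¹ := inv_pos.2 (Real.sqrt_pos.2 ha)
    linarith [ht₀.1.1.trans ht₀.1.2]
  set m := ((√(u a))⁻¹ + (b - a))⁻¹ ^ 2
  have hm_le : ∀ t ∈ Ico a t₀, m ≤ u t := by
    intro t ht
    have hsub : Icc a t ⊆ Icc a b := Icc_subset_Icc_right (ht.2.le.trans ht₀.1.2)
    have hlip := abs_inv_sqrt_sub_le ht.1 (fun s hs => hu s (hsub hs)) (fun s hs => hsc s (hsub hs))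
      (fun s hs => hpos_before s ⟨hs.1, hs.2.trans_lt ht.2⟩)
    have hut := hpos_before t ht
    have hinv : (√(u t))⁻¹ ≤ (√(u a))⁻¹ + (b - a) := by
      linarith [(abs_le.1 hlip).2, ht.2.trans_le ht₀.1.2]
    calc m ≤ ((√(u t))⁻¹)⁻¹ ^ 2 :=
          pow_le_pow_left₀ (by positivity) (inv_anti₀ (by positivity) hinv) 2
      _ = u t := by rw [inv_inv, Real.sq_sqrt hut.le]
  have hm_pos : 0 < m := by positivity
  have ht₀_closure : t₀ ∈ closure (Ico a t₀) := by
    rw [closure_Ico hat₀.ne]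
    exact right_mem_Icc.2 hat₀.le
  have hm_le_t₀ : m ≤ u t₀ := ContinuousWithinAt.closure_le ht₀_closure continuousWithinAt_const
    (hu t₀ ht₀.1).continuousAt.continuousWithinAt hm_le
  linarith [ht₀.2]

theorem le_sq_div_one_sub_mul {lam : ℝ} (hu : ∀ t ∈ Icc 0 b, HasDerivAt u (u' t) t)
    (hsc : ∀ t ∈ Icc 0 b, |u' t| ≤ 2 * u t ^ ((3 : ℝ) / 2)) (hlam : 0 < lam)
    (hu0 : u 0 = lam ^ 2) (hb : b * lam < 1) :
    ∀ t ∈ Icc 0 b, u t ≤ (lam / (1 - lam * t)) ^ 2 := by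
  intro t ht
  have hsub : Icc 0 t ⊆ Icc 0 b := Icc_subset_Icc_right ht.2
  have hpos := pos_of_abs_deriv_le_two_rpow hu hsc (by rw [hu0]; positivity)
  have hlip := abs_inv_sqrt_sub_le ht.1 (fun s hs => hu s (hsub hs)) (fun s hs => hsc s (hsub hs))
    (fun s hs => hpos s (hsub hs))
  rw [hu0, Real.sqrt_sq hlam.le, sub_zero] at hlip
  have hgap : 0 < 1 - lam * t := by nlinarith [ht.2]
  have hinv : (1 - lam * t) / lam ≤ (√(u t))⁻¹ := by
    rw [sub_div, one_div, mul_div_cancel_left₀ _ hlam.ne']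
    linarith [(abs_le.1 hlip).1]
  have hsqrt : √(u t) ≤ lam / (1 - lam * t) := by
    rw [← inv_div]
    exact (le_inv_comm₀ (by positivity) (Real.sqrt_pos.2 (hpos t ht))).1 hinv
  calc u t = √(u t) ^ 2 := (Real.sq_sqrt (hpos t ht).le).symm
    _ ≤ (lam / (1 - lam * t)) ^ 2 := by gcongr

end SelfConcordantODE

theorem hasDerivAt_omegaStar_mul {lam t : ℝ} (h : lam * t < 1) :
    HasDerivAt (fun s => omegaStar (lam * s)) (lam ^ 2 * t / (1 - lam * t)) t := by
  have hlin : HasDerivAt (fun s => lam * s) lam t := by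
    simpa using (hasDerivAt_id t).const_mul lam
  have hden : 1 - lam * t ≠ 0 := by linarith
  have hlog := (hlin.const_sub 1).log hden
  refine (hlin.neg.sub hlog).congr_deriv ?_
  field_simp
  ring

theorem hasDerivAt_sq_mul_div_one_sub_mul {lam t : ℝ} (h : lam * t < 1) :
    HasDerivAt (fun s => lam ^ 2 * s / (1 - lam * s)) ((lam / (1 - lam * t)) ^ 2) t := by
  have hlin : HasDerivAt (fun s => lam * s) lam t := by
    simpa using (hasDerivAt_id t).const_mul lam
  have hden : 1 - lam * t ≠ 0 := by linarith
  refine (((hasDerivAt_id' t).const_mul (lam ^ 2)).div (hlin.const_sub 1) hden).congr_deriv ?_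
  field_simp
  ring

theorem le_add_mul_add_omegaStar {φ φ' u u' : ℝ → ℝ} {α lam : ℝ} (hα : 0 ≤ α)
    (hφ : ∀ t ∈ Icc 0 α, HasDerivAt φ (φ' t) t) (hφ' : ∀ t ∈ Icc 0 α, HasDerivAt φ' (u t) t)
    (hu : ∀ t ∈ Icc 0 α, HasDerivAt u (u' t) t)
    (hsc : ∀ t ∈ Icc 0 α, |u' t| ≤ 2 * u t ^ ((3 : ℝ) / 2))
    (hlam : 0 < lam) (hu0 : u 0 = lam ^ 2) (hαlam : α * lam < 1) :
    φ α ≤ φ 0 + φ' 0 * α + omegaStar (lam * α) := by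
  have hlt : ∀ t ∈ Icc 0 α, lam * t < 1 := fun t ht => by nlinarith [ht.2]
  have hcmp := sub_sub_mul_le_of_deriv2_le hα hφ hφ'
    (fun t ht => hasDerivAt_omegaStar_mul (hlt t ht))
    (fun t ht => hasDerivAt_sq_mul_div_one_sub_mul (hlt t ht))
    (fun t ht => le_sq_div_one_sub_mul hu hsc hlam hu0 hαlam t (Ioo_subset_Icc_self ht))
  simp only [omegaStar, mul_zero, sub_zero, neg_zero, zero_div, zero_mul, Real.log_one] at hcmp
  simp only [omegaStar]
  linarith

theorem omega_pos {s : ℝ} (hs : 0 < s) : 0 < omega s := by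
  have := Real.log_lt_sub_one_of_pos (by linarith : (0 : ℝ) < 1 + s) (by linarith)
  rw [omega]
  linarith

theorem omega_le_omega {s t : ℝ} (hs : 0 ≤ s) (hst : s ≤ t) : omega s ≤ omega t := by
  have hs1 : 0 < 1 + s := by linarith
  have hlog := Real.log_le_sub_one_of_pos (div_pos (by linarith : (0 : ℝ) < 1 + t) hs1)
  rw [Real.log_div (by linarith) hs1.ne'] at hlog
  have : (1 + t) / (1 + s) - 1 ≤ t - s := by
    rw [div_sub_one hs1.ne', div_le_iff₀ hs1]
    nlinarith
  rw [omega, omega]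
  linarith

theorem omegaStar_mul_inv_one_add {lam : ℝ} (h : 1 + lam ≠ 0) :
    omegaStar (lam * (1 + lam)⁻¹) = (1 + lam)⁻¹ * lam ^ 2 - omega lam := by
  have h1 : 1 - lam * (1 + lam)⁻¹ = (1 + lam)⁻¹ := by field_simp; ring
  rw [omegaStar, omega, h1, Real.log_inv]
  field_simp
  ring

theorem Matrix.IsSymm.dotProduct_mulVec_sub_smul {ι : Type*} [Fintype ι] {H : Matrix ι ι ℝ}
    (hH : H.IsSymm) (p d : ι → ℝ) (t : ℝ) :
    (p - t • d) ⬝ᵥ H *ᵥ (p - t • d) =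
      p ⬝ᵥ H *ᵥ p - 2 * t * (d ⬝ᵥ H *ᵥ p) + t ^ 2 * (d ⬝ᵥ H *ᵥ d) := by
  have hcomm : p ⬝ᵥ H *ᵥ d = d ⬝ᵥ H *ᵥ p := by
    rw [dotProduct_mulVec, ← mulVec_transpose, hH.eq, dotProduct_comm]
  simp only [mulVec_sub, mulVec_smul, sub_dotProduct, dotProduct_sub, smul_dotProduct,
    dotProduct_smul, smul_eq_mul, hcomm]
  ring

theorem EConvex.apply_smul_add_smul_le {g : (Fin n → ℝ) → EReal} (hg : EConvex g)
    {x y : Fin n → ℝ} {a b s t : ℝ} (hx : g x ≤ a) (hy : g y ≤ b) (hs : 0 ≤ s) (ht : 0 ≤ t)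
    (hst : s + t = 1) : g (s • x + t • y) ≤ ((s * a + t * b : ℝ) : EReal) := by
  rw [EReal.coe_add, EReal.coe_mul, EReal.coe_mul]
  exact (hg x y s t hs ht hst).trans (add_le_add
    (mul_le_mul_of_nonneg_left hx (EReal.coe_nonneg.2 hs))
    (mul_le_mul_of_nonneg_left hy (EReal.coe_nonneg.2 ht)))

theorem IsProxPt.apply_add_le {H : Matrix (Fin n) (Fin n) ℝ} (hH : H.IsSymm)
    {g : (Fin n → ℝ) → EReal} (hgbot : ∀ y, g y ≠ ⊥) (hg : EConvex g) {x d v : Fin n → ℝ}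
    (hgx : g x ≠ ⊤) (hprox : IsProxPt H g (H *ᵥ x - v) (x + d)) :
    g (x + d) ≤ (((g x).toReal - v ⬝ᵥ d - d ⬝ᵥ H *ᵥ d : ℝ) : EReal) := by
  set b := (g x).toReal
  have hb : g x = b := (EReal.coe_toReal hgx (hgbot x)).symm
  have hfin : g (x + d) ≠ ⊤ := fun htop => by
    have := hprox x
    rw [proxObj, proxObj, htop, EReal.top_add_of_ne_bot (EReal.coe_ne_bot _), hb,
      ← EReal.coe_add, top_le_iff] at this
    exact EReal.coe_ne_top _ this
  set a := (g (x + d)).toReal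
  have ha : g (x + d) = a := (EReal.coe_toReal hfin (hgbot _)).symm
  set Q := d ⬝ᵥ H *ᵥ d
  -- Optimality of `x + d` tested against `x + (1 - t) d`, then `t → 0`.
  have hsegment : ∀ t ∈ Ioo (0 : ℝ) 1, a ≤ b - v ⬝ᵥ d - Q + t * (Q / 2) := by
    intro t ht
    have hy : (1 - t) • (x + d) + t • x = x + d - t • d := by module
    have hconv := hg.apply_smul_add_smul_le (s := 1 - t) (t := t) ha.le hb.le
      (by linarith [ht.2]) ht.1.le (by ring)
    have hmin := (hprox ((1 - t) • (x + d) + t • x)).trans (add_le_add hconv le_rfl)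
    rw [proxObj, ha, ← EReal.coe_add, ← EReal.coe_add, EReal.coe_le_coe_iff, hy,
      hH.dotProduct_mulVec_sub_smul] at hmin
    have hlin : d ⬝ᵥ H *ᵥ (x + d) - (H *ᵥ x - v) ⬝ᵥ d = Q + v ⬝ᵥ d := by
      rw [mulVec_add, dotProduct_add, sub_dotProduct, dotProduct_comm (H *ᵥ x) d]
      ring
    have hdot : (H *ᵥ x - v) ⬝ᵥ (x + d - t • d) =
        (H *ᵥ x - v) ⬝ᵥ (x + d) - t * ((H *ᵥ x - v) ⬝ᵥ d) := by
      rw [dotProduct_sub, dotProduct_smul, smul_eq_mul]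
    rw [hdot] at hmin
    nlinarith [ht.1, hlin]
  have hlim : Tendsto (fun t => b - v ⬝ᵥ d - Q + t * (Q / 2)) (𝓝[>] 0)
      (𝓝 (b - v ⬝ᵥ d - Q)) :=
    (Continuous.tendsto' (by fun_prop) 0 _ (by simp)).mono_left nhdsWithin_le_nhds
  rw [ha, EReal.coe_le_coe_iff]
  exact ge_of_tendsto hlim (eventually_of_mem (Ioo_mem_nhdsGT one_pos) hsegment)

section SelfConcordantFunction

variable {D : Set (Fin n → ℝ)} {f : (Fin n → ℝ) → ℝ} {f' : (Fin n → ℝ) → Fin n → ℝ}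
  {f'' : (Fin n → ℝ) → Matrix (Fin n) (Fin n) ℝ}

theorem StdSelfConcordantOn.apply_add_smul_le (hf : StdSelfConcordantOn D f)
    (hgrad : ∀ x ∈ D, HasFDerivAt f (dotCLM (f' x)) x)
    (hhess : ∀ x ∈ D, HasFDerivAt f' (LinearMap.toContinuousLinearMap (f'' x).mulVecLin) x)
    {x d : Fin n → ℝ} {lam α : ℝ} (hx : x ∈ D) (hlam : 0 < lam)
    (hquad : d ⬝ᵥ f'' x *ᵥ d = lam ^ 2) (hα : 0 < α) (hαlam : α * lam < 1)
    (hxα : x + α • d ∈ D) :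
    f (x + α • d) ≤ f x + (f' x ⬝ᵥ d) * α + omegaStar (lam * α) := by
  obtain ⟨hD_open, hD_conv, -, hf_smooth, hf_sc⟩ := hf
  set φ : ℝ → ℝ := fun s => f (x + s • d)
  set I : Set ℝ := {s | x + s • d ∈ D}
  have hline : ∀ s : ℝ, HasDerivAt (fun s : ℝ => x + s • d) d s := fun s => by
    simpa using ((hasDerivAt_id s).smul_const d).const_add x
  have hI : IsOpen I := hD_open.preimage (by fun_prop)
  have h0I : (0 : ℝ) ∈ I := by simpa [I] using hx
  have hIcc : Icc 0 α ⊆ I := fun t ht => by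
    have := hD_conv.add_smul_mem hx hxα (t := t / α)
      ⟨div_nonneg ht.1 hα.le, (div_le_one hα).2 ht.2⟩
    rwa [smul_smul, div_mul_cancel₀ t hα.ne'] at this
  have hφ : ContDiffOn ℝ 3 φ I :=
    hf_smooth.comp (by fun_prop : ContDiff ℝ 3 fun s : ℝ => x + s • d).contDiffOn fun s hs => hs
  have hφ_deriv : ∀ s ∈ I, HasDerivAt φ (d ⬝ᵥ f' (x + s • d)) s := fun s hs => by
    rw [dotProduct_comm]
    exact (hgrad _ hs).comp_hasDerivAt s (hline s)
  have hφ'_deriv : HasDerivAt (fun s : ℝ => d ⬝ᵥ f' (x + s • d)) (d ⬝ᵥ f'' x *ᵥ d) 0 := by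
    have := (dotCLM d).hasFDerivAt.comp_hasDerivAt (0 : ℝ)
      ((hhess (x + (0 : ℝ) • d) h0I).comp_hasDerivAt 0 (hline 0))
    simpa [dotCLM, Function.comp_def] using this
  have hu0 : iteratedDeriv 2 φ 0 = lam ^ 2 := by
    have hφ'_eq : deriv φ =ᶠ[𝓝 0] fun s => d ⬝ᵥ f' (x + s • d) :=
      eventually_of_mem (hI.mem_nhds h0I) fun s hs => (hφ_deriv s hs).deriv
    rw [iteratedDeriv_succ, iteratedDeriv_one, hφ'_eq.deriv_eq, hφ'_deriv.deriv, hquad]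
  have hderiv : ∀ k < 3, ∀ t ∈ Icc 0 α,
      HasDerivAt (iteratedDeriv k φ) (iteratedDeriv (k + 1) φ t) t := fun k hk t ht =>
    hφ.hasDerivAt_iteratedDeriv hI (by exact_mod_cast hk) (hIcc ht)
  have h1 : iteratedDeriv 1 φ 0 = f' x ⬝ᵥ d := by
    rw [iteratedDeriv_one, (hφ_deriv 0 h0I).deriv, dotProduct_comm]
    simp
  have := le_add_mul_add_omegaStar hα.le
    (fun t ht => by simpa only [iteratedDeriv_zero] using hderiv 0 (by norm_num) t ht)
    (hderiv 1 (by norm_num)) (hderiv 2 (by norm_num))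
    (fun t ht => hf_sc x hx d t (hIcc ht)) hlam hu0 hαlam
  simpa [φ, h1] using this

theorem Fext_eq_coe {g : (Fin n → ℝ) → EReal} {x : Fin n → ℝ} (hx : x ∈ D) (hgx : g x ≠ ⊤)
    (hgx' : g x ≠ ⊥) : Fext D f g x = ((f x + (g x).toReal : ℝ) : EReal) := by
  rw [Fext, if_pos hx, EReal.coe_add, EReal.coe_toReal hgx hgx']

theorem Fext_damped_step_le (hf : StdSelfConcordantOn D f)
    (hgrad : ∀ x ∈ D, HasFDerivAt f (dotCLM (f' x)) x)
    (hhess : ∀ x ∈ D, HasFDerivAt f' (LinearMap.toContinuousLinearMap (f'' x).mulVecLin) x)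
    {g : (Fin n → ℝ) → EReal} (hgbot : ∀ y, g y ≠ ⊥) (hg : EConvex g) {x d : Fin n → ℝ}
    {lam : ℝ} (hx : x ∈ D) (hgx : g x ≠ ⊤) (hpd : (f'' x).PosDef)
    (hprox : IsProxPt (f'' x) g (f'' x *ᵥ x - f' x) (x + d)) (hlam : lam = mNorm (f'' x) d)
    (hlam0 : 0 < lam) (hx' : x + (1 + lam)⁻¹ • d ∈ D) :
    Fext D f g (x + (1 + lam)⁻¹ • d) ≤ ((f x + (g x).toReal - omega lam : ℝ) : EReal) := by
  set α := (1 + lam)⁻¹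
  have hα0 : 0 < α := by positivity
  have hα1 : α ≤ 1 := inv_le_one_of_one_le₀ (by linarith)
  have hαlam : α * lam < 1 := by
    rw [inv_mul_lt_iff₀ (by positivity)]
    linarith
  have hquad : d ⬝ᵥ f'' x *ᵥ d = lam ^ 2 := by
    rw [hlam, mNorm, Real.sq_sqrt (by simpa using hpd.posSemidef.dotProduct_mulVec_nonneg d)]
  have hf_step := hf.apply_add_smul_le hgrad hhess hx hlam0 hquad hα0 hαlam hx'
  have hg_prox := hprox.apply_add_le (isHermitian_iff_isSymm.1 hpd.isHermitian) hgbot hg hgx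
  have hg_step := hg.apply_smul_add_smul_le (s := 1 - α) (t := α)
    (EReal.coe_toReal hgx (hgbot x)).ge hg_prox (by linarith) hα0.le (by ring)
  rw [show (1 - α) • x + α • (x + d) = x + α • d by module, hquad] at hg_step
  rw [Fext, if_pos hx']
  refine (add_le_add le_rfl hg_step).trans ?_
  rw [← EReal.coe_add, EReal.coe_le_coe_iff]
  have := omegaStar_mul_inv_one_add (lam := lam) (by linarith)
  linarith

end SelfConcordantFunction

theorem le_sub_mul_of_forall_le_sub {Φ lam : ℕ → ℝ} {σ c : ℝ}
    (hstep : ∀ k, σ ≤ lam k → Φ (k + 1) ≤ Φ k - c) :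
    ∀ k : ℕ, (∀ j < k, σ ≤ lam j) → Φ k ≤ Φ 0 - k * c := by
  intro k
  induction k with
  | zero => simp
  | succ k ih =>
    intro hk
    have := hstep k (hk k k.lt_succ_self)
    have := ih fun j hj => hk j (hj.trans k.lt_succ_self)
    push_cast
    linarith

theorem exists_le_floor_add_one_lt {Φ lam : ℕ → ℝ} {σ c m : ℝ} (hc : 0 < c)
    (hlow : ∀ k, m ≤ Φ k) (hdesc : ∀ k : ℕ, (∀ j < k, σ ≤ lam j) → Φ k ≤ Φ 0 - k * c) :
    ∃ k ≤ ⌊(Φ 0 - m) / c⌋₊ + 1, lam k < σ := by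
  by_contra! hall
  set N := ⌊(Φ 0 - m) / c⌋₊
  have h := hdesc (N + 2) fun j hj => hall j (by omega)
  have hN : ((N + 2 : ℕ) : ℝ) ≤ (Φ 0 - m) / c := by
    rw [le_div_iff₀ hc]
    linarith [hlow (N + 2)]
  have := Nat.le_floor hN
  omega

theorem damped_newton_iteration_bound_general
    (n : ℕ) (D : Set (Fin n → ℝ)) (f : (Fin n → ℝ) → ℝ)
    (f' : (Fin n → ℝ) → Fin n → ℝ)
    (f'' : (Fin n → ℝ) → Matrix (Fin n) (Fin n) ℝ)
    (hf : StdSelfConcordantOn D f)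
    (hgrad : ∀ x ∈ D, HasFDerivAt f (dotCLM (f' x)) x)
    (hhess : ∀ x ∈ D,
      HasFDerivAt f' (LinearMap.toContinuousLinearMap (f'' x).mulVecLin) x)
    (g : (Fin n → ℝ) → EReal) (hg_proper : EProper g)
    (hg_conv : EConvex g)
    (x d : ℕ → Fin n → ℝ) (lam : ℕ → ℝ)
    (hdom : ∀ k, x k ∈ D ∧ g (x k) ≠ ⊤)
    (hpd : ∀ k, (f'' (x k)).PosDef)
    (hprox : ∀ k,
      IsProxPt (f'' (x k)) g ((f'' (x k)).mulVec (x k) - f' (x k)) (x k + d k))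
    (hlam : ∀ k, lam k = mNorm (f'' (x k)) (d k))
    (hupd : ∀ k, x (k + 1) = x k + (1 + lam k)⁻¹ • d k)
    (xs : Fin n → ℝ) (hxsD : xs ∈ D) (hxsg : g xs ≠ ⊤)
    (hxs_min : ∀ y, Fext D f g xs ≤ Fext D f g y)
    (sigma : ℝ) (hs0 : 0 < sigma) :
    (∀ k : ℕ, (∀ j < k, sigma ≤ lam j) →
        Fext D f g xs ≤ Fext D f g (x k) ∧
          Fext D f g (x k) ≤ Fext D f g (x 0) - (((k : ℝ) * omega sigma : ℝ) : EReal)) ∧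
      ∃ k : ℕ,
        k ≤ ⌊(Fext D f g (x 0) - Fext D f g xs).toReal / omega sigma⌋₊ + 1 ∧
          lam k < sigma := by
  set Φ : ℕ → ℝ := fun k => f (x k) + (g (x k)).toReal
  have hΦ : ∀ k, Fext D f g (x k) = Φ k := fun k =>
    Fext_eq_coe (hdom k).1 (hdom k).2 (hg_proper.1 _)
  have hmin : Fext D f g xs = ((f xs + (g xs).toReal : ℝ) : EReal) :=
    Fext_eq_coe hxsD hxsg (hg_proper.1 _)
  have hstep : ∀ k, sigma ≤ lam k → Φ (k + 1) ≤ Φ k - omega sigma := fun k hk => by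
    have hlam0 : 0 < lam k := hs0.trans_le hk
    have hdesc := Fext_damped_step_le hf hgrad hhess hg_proper.1 hg_conv (hdom k).1 (hdom k).2
      (hpd k) (hprox k) (hlam k) hlam0 (hupd k ▸ (hdom (k + 1)).1)
    rw [← hupd k, hΦ, EReal.coe_le_coe_iff] at hdesc
    linarith [omega_le_omega hs0.le hk]
  have hdesc := le_sub_mul_of_forall_le_sub hstep
  have hlow : ∀ k, f xs + (g xs).toReal ≤ Φ k := fun k => by
    have := hxs_min (x k)
    rwa [hmin, hΦ, EReal.coe_le_coe_iff] at this
  refine ⟨fun k hk => ⟨hxs_min _, ?_⟩, ?_⟩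
  · rw [hΦ, hΦ, ← EReal.coe_sub, EReal.coe_le_coe_iff]
    exact hdesc k hk
  · rw [hΦ, hmin, ← EReal.coe_sub, EReal.toReal_coe]
    simpa using exists_le_floor_add_one_lt (omega_pos hs0) hlow hdesc

/-- Along the damped proximal-Newton iterations, if `λ_j ≥ σ` for
`j = 0,…,k−1` then `F(x*) ≤ F(x^k) ≤ F(x⁰) − k ω(σ)`; consequently at most
`⌊(F(x⁰) − F(x*))/ω(σ)⌋ + 1` iterations are needed to reach `λ_k < σ`. -/
theorem damped_newton_iteration_bound
    (n : ℕ) (D : Set (Fin n → ℝ)) (f : (Fin n → ℝ) → ℝ)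
    (f' : (Fin n → ℝ) → Fin n → ℝ)
    (f'' : (Fin n → ℝ) → Matrix (Fin n) (Fin n) ℝ)
    (hf : StdSelfConcordantOn D f)
    (hgrad : ∀ x ∈ D, HasFDerivAt f (dotCLM (f' x)) x)
    (hhess : ∀ x ∈ D,
      HasFDerivAt f' (LinearMap.toContinuousLinearMap (f'' x).mulVecLin) x)
    (g : (Fin n → ℝ) → EReal) (hg_proper : EProper g)
    (hg_lsc : LowerSemicontinuous g) (hg_conv : EConvex g)
    (x d : ℕ → Fin n → ℝ) (lam : ℕ → ℝ)
    (hdom : ∀ k, x k ∈ D ∧ g (x k) ≠ ⊤)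
    (hpd : ∀ k, (f'' (x k)).PosDef)
    (hprox : ∀ k,
      IsProxPt (f'' (x k)) g ((f'' (x k)).mulVec (x k) - f' (x k)) (x k + d k))
    (hlam : ∀ k, lam k = mNorm (f'' (x k)) (d k))
    (hupd : ∀ k, x (k + 1) = x k + (1 + lam k)⁻¹ • d k)
    (xs : Fin n → ℝ) (hxsD : xs ∈ D) (hxsg : g xs ≠ ⊤)
    (hxs_min : ∀ y, Fext D f g xs ≤ Fext D f g y)
    (sigma : ℝ) (hs0 : 0 < sigma) (hs1 : sigma < 1) :
    (∀ k : ℕ, (∀ j < k, sigma ≤ lam j) →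
        Fext D f g xs ≤ Fext D f g (x k) ∧
          Fext D f g (x k) ≤ Fext D f g (x 0) - (((k : ℝ) * omega sigma : ℝ) : EReal)) ∧
      ∃ k : ℕ,
        k ≤ ⌊(Fext D f g (x 0) - Fext D f g xs).toReal / omega sigma⌋₊ + 1 ∧
          lam k < sigma :=
  damped_newton_iteration_bound_general n D f f' f'' hf hgrad hhess g hg_proper hg_conv x d lam hdom
    hpd hprox hlam hupd xs hxsD hxsg hxs_min sigma hs0
end
end
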